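/- Let A₀ ∈ ℝ^{n×n} be a Metzler matrix and ν₀ = (ν_{0,ij}) an n×n matrix of finite nonnegative Borel measures on [−h,0], and assume the positive linear delay system ẋ(t) = A₀ x(t) + ∫_{[−h,0]} d[ν₀(θ)] x(t+θ), t ≥ 0, is exponentially stable. Then every time-delay switched linear system ẋ(t) = A⁰_{σ(t)} x(t) + ∫_{[−h,0]} d[ν_{σ(t)}(θ)] x(t+θ), σ ∈ Σ₊, whose data satisfy, entrywise for every k = 1,…,N, M(A⁰_k) ≤ A₀ and V(ν_k) ≤ V(ν₀), is exponentially stable under arbitrary switching: there exist M > 0, α > 0 such that every solution with initial function φ ∈ C([−h,0],ℝⁿ) and any σ ∈ Σ₊ satisfies ‖x(t)‖ ≤ M e^{−αt} ‖φ‖ for all t ≥ 0. -/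

import Mathlib

open MeasureTheory Set Filter Matrix
open scoped ENNReal

noncomputable section

/-- Integral of a real function against a finite signed Borel measure. -/
def sint {α : Type*} [MeasurableSpace α] (s : MeasureTheory.SignedMeasure α) (f : α → ℝ) : ℝ :=
  (∫ a, f a ∂s.toJordanDecomposition.posPart) - ∫ a, f a ∂s.toJordanDecomposition.negPart

/-- Total variation of a finite signed measure, evaluated on the whole space. -/
def tvar {α : Type*} [MeasurableSpace α] (s : MeasureTheory.SignedMeasure α) : ℝ :=
  (s.totalVariation Set.univ).toReal

/-- Row-sum matrix norm (the operator norm induced by the `∞`-norm). -/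
def matNorm {p q : ℕ} (A : Matrix (Fin p) (Fin q) ℝ) : ℝ :=
  ⨆ i, ∑ j, |A i j|

/-- The Metzler matrix `M(A)` associated with `A`. -/
def metz {n : ℕ} (A : Matrix (Fin n) (Fin n) ℝ) : Matrix (Fin n) (Fin n) ℝ :=
  Matrix.of fun i j => if i = j then A i j else |A i j|

/-- The matrix `V(ν)` of total variations of a matrix of signed measures. -/
def Vmat {h : ℝ} {p q : ℕ}
    (ν : Fin p → Fin q → MeasureTheory.SignedMeasure (Set.Icc (-h) (0:ℝ))) :
    Matrix (Fin p) (Fin q) ℝ :=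
  Matrix.of fun i j => tvar (ν i j)

/-- The norm `‖ν‖ = max_i Σ_j |ν_{ij}|([-h,0])` of a matrix of signed measures. -/
def mnorm {h : ℝ} {p q : ℕ}
    (ν : Fin p → Fin q → MeasureTheory.SignedMeasure (Set.Icc (-h) (0:ℝ))) : ℝ :=
  ⨆ i, ∑ j, tvar (ν i j)

/-- A switching signal: piecewise constant, right continuous, with strictly
positive dwell time (and normalized to be constant on `(-∞, 0]`). -/
def IsSwitchingSignal {N : ℕ} (σ : ℝ → Fin N) : Prop :=
  (∀ t ≤ (0:ℝ), σ t = σ 0) ∧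
  ∃ d : ℝ, 0 < d ∧ ∃ τ : ℕ → ℝ, τ 0 = 0 ∧ (∀ k, τ k + d ≤ τ (k + 1)) ∧
    ∀ k : ℕ, ∀ t ∈ Set.Ico (τ k) (τ (k + 1)), σ t = σ (τ k)

/-- `x` is a solution of the switched delay system `ẋ(t) = A⁰_{σ(t)} x(t) +
∫_{[-h,0]} d[ν_{σ(t)}(θ)] x(t+θ)` with switching signal `σ` and initial function `φ`. -/
def IsSolution (h : ℝ) {N n : ℕ} (σ : ℝ → Fin N)
    (A : Fin N → Matrix (Fin n) (Fin n) ℝ)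
    (ν : Fin N → Fin n → Fin n → MeasureTheory.SignedMeasure (Set.Icc (-h) (0:ℝ)))
    (φ : C(Set.Icc (-h) (0:ℝ), Fin n → ℝ)) (x : ℝ → Fin n → ℝ) : Prop :=
  ContinuousOn x (Set.Ici (-h)) ∧
  (∀ θ : Set.Icc (-h) (0:ℝ), x (θ : ℝ) = φ θ) ∧
  ∀ t : ℝ, 0 ≤ t → (∀ᶠ s in nhds t, σ s = σ t) → ∀ i,
    HasDerivWithinAt (fun s => x s i)
      ((∑ j, A (σ t) i j * x t j) +
        ∑ j, sint (ν (σ t) i j) fun θ => x (t + (θ : ℝ)) j)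
      (Set.Ici t) t

/-- Exponential stability of the switched system under arbitrary switching. -/
def ExpStableSw (h : ℝ) {N n : ℕ}
    (A : Fin N → Matrix (Fin n) (Fin n) ℝ)
    (ν : Fin N → Fin n → Fin n → MeasureTheory.SignedMeasure (Set.Icc (-h) (0:ℝ))) : Prop :=
  ∃ M > (0:ℝ), ∃ α > (0:ℝ), ∀ σ : ℝ → Fin N, IsSwitchingSignal σ →
    ∀ φ x, IsSolution h σ A ν φ x →
      ∀ t ≥ (0:ℝ), ‖x t‖ ≤ M * Real.exp (-α * t) * ‖φ‖

/-- `x` is a solution of the (non-switched) delay system `(A, ν)` with initial function `φ`. -/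
def IsSolution1 (h : ℝ) {n : ℕ} (A : Matrix (Fin n) (Fin n) ℝ)
    (ν : Fin n → Fin n → MeasureTheory.SignedMeasure (Set.Icc (-h) (0:ℝ)))
    (φ : C(Set.Icc (-h) (0:ℝ), Fin n → ℝ)) (x : ℝ → Fin n → ℝ) : Prop :=
  ContinuousOn x (Set.Ici (-h)) ∧
  (∀ θ : Set.Icc (-h) (0:ℝ), x (θ : ℝ) = φ θ) ∧
  ∀ t : ℝ, 0 ≤ t → ∀ i,
    HasDerivWithinAt (fun s => x s i)
      ((∑ j, A i j * x t j) + ∑ j, sint (ν i j) fun θ => x (t + (θ : ℝ)) j)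
      (Set.Ici t) t

/-- Exponential stability of a single (non-switched) delay system. -/
def ExpStable1 (h : ℝ) {n : ℕ} (A : Matrix (Fin n) (Fin n) ℝ)
    (ν : Fin n → Fin n → MeasureTheory.SignedMeasure (Set.Icc (-h) (0:ℝ))) : Prop :=
  ∃ M > (0:ℝ), ∃ α > (0:ℝ), ∀ φ x, IsSolution1 h A ν φ x →
    ∀ t ≥ (0:ℝ), ‖x t‖ ≤ M * Real.exp (-α * t) * ‖φ‖


/-!
Because `A0` is Metzler and `μ0 ≥ 0`, stability of the positive system produces a vector `ξ > 0`
with `(A0 + V0) ξ = -1`, where `V0 = V(μ0)`. For `s ≥ 0` the characteristic matrix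
`Δ(s) = s I - A0 - ∫ e^{sθ} dμ0(θ)` is invertible, since an eigenvector `v` would give the
non-decaying solution `e^{st} v`. The vector `Δ(s)⁻¹ 1` depends continuously on `s`, is positive
for large `s`, and cannot lose positivity as `s` decreases to `0`, because a nonnegative solution
of `Δ(s) ξ = 1` is automatically positive.

For small `β > 0`, `C e^{-βt} ξ` is then a common barrier for all the dominated subsystems: at the
first time some `|x_i|` touches it, the dominations `M(A_k) ≤ A0`, `V(ν_k) ≤ V0` bound the right
derivative of `± x_i - C e^{-βt} ξ_i` by a multiple of itself on the last dwell interval, and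
Grönwall's inequality keeps it strictly negative, a contradiction.
-/

open Topology

section SignedIntegral

variable {X : Type*} [MeasurableSpace X]

lemma tvar_eq_posPart_add_negPart (s : SignedMeasure X) :
    tvar s =
      s.toJordanDecomposition.posPart.real univ + s.toJordanDecomposition.negPart.real univ := by
  rw [tvar, SignedMeasure.totalVariation, Measure.add_apply, ENNReal.toReal_add] <;>
    simp [measureReal_def, measure_ne_top]

lemma abs_sint_le (s : SignedMeasure X) {f : X → ℝ} {C : ℝ} (hf : ∀ θ, |f θ| ≤ C) :
    |sint s f| ≤ tvar s * C := by
  have hint : ∀ (μ : Measure X) [IsFiniteMeasure μ], |∫ θ, f θ ∂μ| ≤ C * μ.real univ :=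
    fun μ _ => by
      simpa [Real.norm_eq_abs] using norm_integral_le_of_norm_le_const (μ := μ)
        (.of_forall fun θ => (Real.norm_eq_abs (f θ)).trans_le (hf θ))
  rw [sint, tvar_eq_posPart_add_negPart, add_mul]
  calc _ ≤ _ := abs_sub _ _
    _ ≤ _ := add_le_add (hint _) (hint _)
    _ = _ := by ring

lemma sint_toSignedMeasure (μ : Measure X) [IsFiniteMeasure μ] (f : X → ℝ) :
    sint μ.toSignedMeasure f = ∫ θ, f θ ∂μ := by
  have hjd : μ.toSignedMeasure.toJordanDecomposition = ⟨μ, 0, .zero_right⟩ := by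
    rw [← JordanDecomposition.toJordanDecomposition_toSignedMeasure ⟨μ, 0, .zero_right⟩]
    simp [JordanDecomposition.toSignedMeasure]
  simp [sint, hjd]

end SignedIntegral

lemma ExpStable1.tendsto_zero {h : ℝ} {n : ℕ} {A0 : Matrix (Fin n) (Fin n) ℝ}
    {ν : Fin n → Fin n → SignedMeasure (Icc (-h) (0:ℝ))} (hstab : ExpStable1 h A0 ν)
    {φ : C(Icc (-h) (0:ℝ), Fin n → ℝ)} {x : ℝ → Fin n → ℝ} (hx : IsSolution1 h A0 ν φ x) :
    Tendsto x atTop (𝓝 0) := by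
  obtain ⟨M, -, α, hα, hbound⟩ := hstab
  refine squeeze_zero_norm' ((eventually_ge_atTop 0).mono fun t ht => hbound φ x hx t ht) ?_
  simpa using ((Real.tendsto_exp_atBot.comp
    (tendsto_id.const_mul_atTop_of_neg (neg_lt_zero.2 hα))).const_mul M).mul_const ‖φ‖

section ExpMoment

variable {h : ℝ} {n : ℕ} (μ : Fin n → Fin n → Measure (Icc (-h) (0:ℝ)))

def expMomentMat (s : ℝ) : Matrix (Fin n) (Fin n) ℝ :=
  Matrix.of fun i j => ∫ θ, Real.exp (s * θ) ∂μ i j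

lemma expMomentMat_zero : expMomentMat μ 0 = Matrix.of fun i j => (μ i j).real univ := by
  ext; simp [expMomentMat]

lemma expMomentMat_nonneg (s : ℝ) (i j : Fin n) : 0 ≤ expMomentMat μ s i j :=
  integral_nonneg fun _ => (Real.exp_pos _).le

variable [∀ i j, IsFiniteMeasure (μ i j)]

lemma continuous_expMomentMat : Continuous (expMomentMat μ) := by
  refine continuous_matrix fun i j => ?_
  simpa [expMomentMat] using continuous_parametric_integral_of_continuous (μ := μ i j)
    (f := fun s (θ : Icc (-h) (0:ℝ)) => Real.exp (s * θ)) (by fun_prop) isCompact_univ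

lemma abs_expMomentMat_apply_le {s : ℝ} (hs : 0 ≤ s) (i j : Fin n) :
    |expMomentMat μ s i j| ≤ (μ i j).real univ := by
  have hexp : ∀ θ : Icc (-h) (0:ℝ), ‖Real.exp (s * θ)‖ ≤ 1 := fun θ => by
    rw [Real.norm_of_nonneg (Real.exp_pos _).le, Real.exp_le_one_iff]
    exact mul_nonpos_of_nonneg_of_nonpos hs θ.2.2
  simpa [expMomentMat] using norm_integral_le_of_norm_le_const (μ := μ i j) (.of_forall hexp)

lemma isSolution1_exp_smul {A0 : Matrix (Fin n) (Fin n) ℝ} {s : ℝ} {v : Fin n → ℝ}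
    (hv : (A0 + expMomentMat μ s) *ᵥ v = s • v) :
    IsSolution1 h A0 (fun i j => (μ i j).toSignedMeasure)
      ((ContinuousMap.mk (fun t : ℝ => Real.exp (s * t) • v) (by fun_prop)).restrict (Icc (-h) 0))
      (fun t => Real.exp (s * t) • v) := by
  refine ⟨by fun_prop, fun θ => rfl, fun t _ i => ?_⟩
  have hderiv : HasDerivAt (fun u => Real.exp (s * u) * v i) (Real.exp (s * t) * (s * v i)) t := by
    have := (((hasDerivAt_id t).const_mul s).exp).mul_const (v i)
    simp only [id, mul_one] at this
    exact this.congr_deriv (by ring)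
  have hrow := congrFun hv i
  simp only [mulVec, dotProduct, Matrix.add_apply, add_mul, Finset.sum_add_distrib, expMomentMat,
    of_apply, Pi.smul_apply, smul_eq_mul] at hrow
  refine hderiv.hasDerivWithinAt.congr_deriv ?_
  have hint : ∀ j, ∫ θ : Icc (-h) (0:ℝ), Real.exp (s * (t + θ)) * v j ∂μ i j =
      Real.exp (s * t) * ((∫ θ : Icc (-h) (0:ℝ), Real.exp (s * θ) ∂μ i j) * v j) := fun j => by
    simp only [mul_add, Real.exp_add, mul_assoc, integral_const_mul, integral_mul_const]
  simp only [sint_toSignedMeasure, Pi.smul_apply, smul_eq_mul, hint]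
  rw [← hrow, mul_add, Finset.mul_sum, Finset.mul_sum]
  exact congrArg₂ _ (Finset.sum_congr rfl fun j _ => by ring) rfl

end ExpMoment

lemma pos_of_nonneg_of_smul_sub_mulVec_eq_one {ι : Type*} [Fintype ι] {P : Matrix ι ι ℝ}
    (hP : ∀ i j, i ≠ j → 0 ≤ P i j) {s : ℝ} {ξ : ι → ℝ} (hξ : s • ξ - P *ᵥ ξ = 1)
    (hnn : ∀ i, 0 ≤ ξ i) (i : ι) : 0 < ξ i := by
  refine (hnn i).lt_of_ne fun hzero => ?_
  have hrow := congrFun hξ i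
  have hPξ : 0 ≤ (P *ᵥ ξ) i := Finset.sum_nonneg fun j _ => by
    rcases eq_or_ne j i with rfl | hji
    · rw [← hzero, mul_zero]
    · exact mul_nonneg (hP i j hji.symm) (hnn j)
  simp only [Pi.sub_apply, Pi.smul_apply, smul_eq_mul, ← hzero, mul_zero, zero_sub,
    Pi.one_apply] at hrow
  linarith

section LinftyNorm

attribute [local instance] Matrix.linftyOpNormedAddCommGroup

lemma linfty_opNorm_le_of_abs_le {ι κ : Type*} [Fintype ι] [Fintype κ] {A B : Matrix ι κ ℝ}
    (hAB : ∀ i j, |A i j| ≤ |B i j|) : ‖A‖ ≤ ‖B‖ := by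
  rw [linfty_opNorm_def, linfty_opNorm_def, NNReal.coe_le_coe]
  exact Finset.sup_mono_fun fun i _ => Finset.sum_le_sum fun j _ => by
    simpa [← NNReal.coe_le_coe] using hAB i j

lemma pos_of_smul_sub_mulVec_eq_one {ι : Type*} [Fintype ι] {P : Matrix ι ι ℝ} {s : ℝ}
    {ξ : ι → ℝ} (hs : 2 * ‖P‖ < s) (hξ : s • ξ - P *ᵥ ξ = 1) (i : ι) : 0 < ξ i := by
  have hs0 : 0 < s := by linarith [norm_nonneg P]
  have hsξ : s • ξ = 1 + P *ᵥ ξ := by rw [← hξ]; abel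
  have hPξ := linfty_opNorm_mulVec P ξ
  have hnorm : s * ‖ξ‖ ≤ 1 + ‖P‖ * ‖ξ‖ :=
    calc s * ‖ξ‖ = ‖s • ξ‖ := by rw [norm_smul, Real.norm_of_nonneg hs0.le]
      _ ≤ ‖(1 : ι → ℝ)‖ + ‖P *ᵥ ξ‖ := hsξ ▸ norm_add_le _ _
      _ ≤ 1 + ‖P‖ * ‖ξ‖ := add_le_add ((pi_norm_const_le (1 : ℝ)).trans norm_one.le) hPξ
  have hi : 1 - ‖P‖ * ‖ξ‖ ≤ s * ξ i := by
    have hrow : s * ξ i = 1 + (P *ᵥ ξ) i := by simpa using congrFun hsξ i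
    have := (Real.norm_eq_abs _).symm.trans_le (norm_le_pi_norm (P *ᵥ ξ) i)
    linarith [neg_abs_le ((P *ᵥ ξ) i)]
  have : ‖P‖ * ‖ξ‖ < 1 := by nlinarith [norm_nonneg ξ, norm_nonneg P]
  exact pos_of_mul_pos_right (by linarith) hs0.le

end LinftyNorm

section CharMatrix

variable {h : ℝ} {n : ℕ} {A0 : Matrix (Fin n) (Fin n) ℝ}
  {μ : Fin n → Fin n → Measure (Icc (-h) (0:ℝ))}

variable (A0 μ) in
def delayCharMatrix (s : ℝ) : Matrix (Fin n) (Fin n) ℝ :=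
  s • 1 - (A0 + expMomentMat μ s)

variable [∀ i j, IsFiniteMeasure (μ i j)]

lemma continuous_delayCharMatrix : Continuous (delayCharMatrix A0 μ) := by
  have := continuous_expMomentMat μ
  unfold delayCharMatrix
  fun_prop

lemma ExpStable1.det_delayCharMatrix_ne_zero
    (hstab : ExpStable1 h A0 fun i j => (μ i j).toSignedMeasure) {s : ℝ} (hs : 0 ≤ s) :
    (delayCharMatrix A0 μ s).det ≠ 0 := by
  intro hdet
  obtain ⟨v, hv0, hv⟩ := exists_mulVec_eq_zero_iff.2 hdet
  have heig : (A0 + expMomentMat μ s) *ᵥ v = s • v := by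
    rw [delayCharMatrix, sub_mulVec, smul_mulVec, one_mulVec, sub_eq_zero] at hv
    exact hv.symm
  have hgrow : ∀ t ≥ (0:ℝ), ‖v‖ ≤ ‖Real.exp (s * t) • v‖ := fun t ht => by
    rw [norm_smul, Real.norm_of_nonneg (Real.exp_pos _).le]
    exact le_mul_of_one_le_left (norm_nonneg v) (Real.one_le_exp (mul_nonneg hs ht))
  have hv_le := ge_of_tendsto (hstab.tendsto_zero (isSolution1_exp_smul μ heig)).norm
    ((eventually_ge_atTop 0).mono hgrow)
  exact hv0 (norm_le_zero_iff.1 (by simpa using hv_le))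

section LinftyNorm

attribute [local instance] Matrix.linftyOpNormedAddCommGroup

lemma eventually_pos_of_smul_sub_mulVec_eq_one :
    ∀ᶠ s in atTop, ∀ ξ : Fin n → ℝ, s • ξ - (A0 + expMomentMat μ s) *ᵥ ξ = 1 → ∀ i, 0 < ξ i := by
  set C := ‖A0‖ + ‖expMomentMat μ 0‖
  filter_upwards [eventually_gt_atTop (2 * C), eventually_ge_atTop 0] with s hsC hs ξ hξ
  refine pos_of_smul_sub_mulVec_eq_one (lt_of_le_of_lt ?_ hsC) hξ
  gcongr
  refine (norm_add_le _ _).trans (add_le_add le_rfl (linfty_opNorm_le_of_abs_le fun i j => ?_))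
  rw [abs_of_nonneg (expMomentMat_nonneg μ 0 i j), expMomentMat_zero, of_apply]
  exact abs_expMomentMat_apply_le μ hs i j

end LinftyNorm

theorem ExpStable1.exists_pos_mulVec_eq_neg_one (hA0 : ∀ i j, i ≠ j → 0 ≤ A0 i j)
    (hstab : ExpStable1 h A0 fun i j => (μ i j).toSignedMeasure) :
    ∃ ξ : Fin n → ℝ, (∀ i, 0 < ξ i) ∧ (A0 + expMomentMat μ 0) *ᵥ ξ = -1 := by
  set G := delayCharMatrix A0 μ
  set ξ : ℝ → Fin n → ℝ := fun s => (G s)⁻¹ *ᵥ 1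
  have hdet : ∀ s, 0 ≤ s → (G s).det ≠ 0 := fun s hs => hstab.det_delayCharMatrix_ne_zero hs
  have hξeq : ∀ s, 0 ≤ s → s • ξ s - (A0 + expMomentMat μ s) *ᵥ ξ s = 1 := fun s hs =>
    calc _ = G s *ᵥ ξ s := by simp [G, delayCharMatrix, sub_mulVec, smul_mulVec]
      _ = 1 := by
        simp only [ξ, mulVec_mulVec, mul_nonsing_inv _ (isUnit_iff_ne_zero.2 (hdet s hs)),
          one_mulVec]
  have hcont : ∀ s, (G s).det ≠ 0 → ∀ i, ContinuousAt (fun r => ξ r i) s := fun s hs i =>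
    (continuous_apply i).continuousAt.comp <|
      (continuous_id.matrix_mulVec continuous_const).continuousAt.comp <|
        (continuousAt_matrix_inv _ (by simpa [Ring.inverse_eq_inv'] using continuousAt_inv₀ hs)
          |>.comp continuous_delayCharMatrix.continuousAt)
  have hmetz : ∀ s, 0 ≤ s → (∀ i, 0 ≤ ξ s i) → ∀ i, 0 < ξ s i := fun s hs =>
    pos_of_nonneg_of_smul_sub_mulVec_eq_one
      (fun i j hij => add_nonneg (hA0 i j hij) (expMomentMat_nonneg μ s i j)) (hξeq s hs)
  set u := {s | (G s).det ≠ 0 ∧ ∀ i, 0 < ξ s i}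
  have hu : IsOpen u := isOpen_iff_mem_nhds.2 fun s hs =>
    (continuous_delayCharMatrix.matrix_det.continuousAt.eventually_ne hs.1).and
      (eventually_all.2 fun i => (hcont s hs.1 i).eventually (lt_mem_nhds (hs.2 i)))
  obtain ⟨S, hSpos, hS⟩ := ((eventually_pos_of_smul_sub_mulVec_eq_one (A0 := A0) (μ := μ)).and
    (eventually_ge_atTop 0)).exists
  have hsub : Ici 0 ⊆ u := isPreconnected_Ici.subset_of_closure_inter_subset hu
    ⟨S, hS, hdet S hS, hSpos _ (hξeq S hS)⟩ fun s ⟨hcl, hs⟩ => ⟨hdet s hs, hmetz s hs fun i => by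
      simpa using (hcont s (hdet s hs) i).continuousWithinAt.mem_closure (t := Ioi 0) hcl
        fun r hr => hr.2 i⟩
  refine ⟨ξ 0, (hsub self_mem_Ici).2, ?_⟩
  simpa [neg_eq_iff_eq_neg] using hξeq 0 le_rfl

end CharMatrix

lemma mul_rhs_le_of_dominated {X : Type*} [MeasurableSpace X] {n : ℕ}
    {A A0 V0 : Matrix (Fin n) (Fin n) ℝ} {ν : Fin n → Fin n → SignedMeasure X}
    (hdomA : ∀ i j, metz A i j ≤ A0 i j) (hdomV : ∀ i j, tvar (ν i j) ≤ V0 i j)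
    {y b b' : Fin n → ℝ} {z : Fin n → X → ℝ} (hy : ∀ j, |y j| ≤ b j) (hb' : 0 ≤ b')
    (hz : ∀ j θ, |z j θ| ≤ b' j) {s : ℝ} (hs : |s| ≤ 1) (i : Fin n) :
    s * ((∑ j, A i j * y j) + ∑ j, sint (ν i j) (z j)) ≤
      A i i * (s * y i - b i) + (A0 *ᵥ b) i + (V0 *ᵥ b') i := by
  have habs : ∀ w : ℝ, s * w ≤ |w| := fun w =>
    (le_abs_self _).trans <| by rw [abs_mul]; exact mul_le_of_le_one_left (abs_nonneg w) hs
  have hA : ∀ j, s * (A i j * y j) ≤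
      A0 i j * b j + if j = i then A i i * (s * y i - b i) else 0 := by
    intro j
    split_ifs with hji
    · subst hji
      have hdiag : A j j ≤ A0 j j := by simpa [metz] using hdomA j j
      nlinarith [(abs_nonneg (y j)).trans (hy j)]
    · have hoff : |A i j| ≤ A0 i j := by simpa [metz, Ne.symm hji] using hdomA i j
      calc s * (A i j * y j) ≤ |A i j| * |y j| := (habs _).trans (abs_mul _ _).le
        _ ≤ A0 i j * b j := mul_le_mul hoff (hy j) (abs_nonneg _) ((abs_nonneg _).trans hoff)
        _ = _ := by ring
  have hν : ∀ j, s * sint (ν i j) (z j) ≤ V0 i j * b' j := fun j =>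
    calc _ ≤ |sint (ν i j) (z j)| := habs _
      _ ≤ tvar (ν i j) * b' j := abs_sint_le _ (hz j)
      _ ≤ V0 i j * b' j := mul_le_mul_of_nonneg_right (hdomV i j) (hb' j)
  calc _ = ∑ j, s * (A i j * y j) + ∑ j, s * sint (ν i j) (z j) := by
        rw [mul_add, Finset.mul_sum, Finset.mul_sum]
    _ ≤ ∑ j, (A0 i j * b j + if j = i then A i i * (s * y i - b i) else 0) +
          ∑ j, V0 i j * b' j :=
        add_le_add (Finset.sum_le_sum fun j _ => hA j) (Finset.sum_le_sum fun j _ => hν j)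
    _ = _ := by simp [Finset.sum_add_distrib, mulVec, dotProduct]; ring

lemma forall_pos_of_ne_zero_at_first_zero {ι : Type*} [Finite ι] {f : ℝ → ι → ℝ}
    (hf : ContinuousOn f (Ici 0)) (h0 : ∀ i, 0 < f 0 i)
    (hfirst : ∀ t > 0, (∀ u ∈ Ico 0 t, ∀ j, 0 < f u j) → ∀ i, f t i ≠ 0) :
    ∀ t ≥ 0, ∀ i, 0 < f t i := by
  by_contra! hneg
  set S := {t | 0 ≤ t ∧ ∃ i, f t i ≤ 0}
  have hS : IsClosed S := by
    have : S = ⋃ i, Ici 0 ∩ (fun t => f t i) ⁻¹' Iic 0 := by ext; simp [S]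
    rw [this]
    exact isClosed_iUnion_of_finite fun i =>
      ((continuous_apply i).comp_continuousOn hf).preimage_isClosed_of_isClosed isClosed_Ici
        isClosed_Iic
  obtain ⟨t₀, ht₀, i₀, hi₀⟩ := hneg
  have hbdd : BddBelow S := ⟨0, fun t ht => ht.1⟩
  obtain ⟨ht, i, hi⟩ : sInf S ∈ S := hS.csInf_mem ⟨t₀, ht₀, i₀, hi₀⟩ hbdd
  have hbefore : ∀ u ∈ Ico 0 (sInf S), ∀ j, 0 < f u j := fun u hu j =>
    not_le.1 fun hj => (csInf_le hbdd ⟨hu.1, j, hj⟩).not_gt hu.2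
  have hpos : 0 < sInf S := ht.lt_of_ne fun h0' => (h0 i).not_ge (h0' ▸ hi)
  refine hfirst _ hpos hbefore i (hi.antisymm ?_)
  have hcont : ContinuousWithinAt (fun t => f t i) (Ico 0 (sInf S)) (sInf S) :=
    ((continuous_apply i).comp_continuousOn hf).continuousWithinAt ht |>.mono Ico_subset_Ici_self
  refine ContinuousWithinAt.closure_le (f := fun _ => (0 : ℝ)) (g := fun t => f t i) ?_
    continuousWithinAt_const hcont fun u hu => (hbefore u hu i).le
  rw [closure_Ico hpos.ne]
  exact right_mem_Icc.2 ht

lemma IsSwitchingSignal.exists_const_Ico {N : ℕ} {σ : ℝ → Fin N} (hσ : IsSwitchingSignal σ)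
    {t : ℝ} (ht : 0 < t) : ∃ a ∈ Ico 0 t, ∀ u ∈ Ico a t, ∀ᶠ v in 𝓝 u, σ v = σ a := by
  obtain ⟨-, d, hd, τ, hτ0, hτd, hτσ⟩ := hσ
  have hτmono : Monotone τ := monotone_nat_of_le_succ fun k => by linarith [hτd k]
  have hτlarge : ∀ k : ℕ, k * d ≤ τ k := fun k => by
    induction k with
    | zero => simp [hτ0]
    | succ k ih => push_cast; linarith [hτd k]
  have hex : ∃ k, t ≤ τ k := by
    obtain ⟨k, hk⟩ := exists_nat_ge (t / d)
    exact ⟨k, ((div_le_iff₀ hd).1 hk).trans (hτlarge k)⟩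
  obtain ⟨k, hk⟩ : ∃ k, Nat.find hex = k + 1 :=
    Nat.exists_eq_succ_of_ne_zero fun h0 => by
      have := Nat.find_spec hex
      rw [h0, hτ0] at this
      linarith
  have hleft : τ k < t := not_le.1 (Nat.find_min hex (by omega))
  have hright : t ≤ τ (k + 1) := hk ▸ Nat.find_spec hex
  have hconst : ∀ v ∈ Ioo (τ k) (τ (k + 1)), σ v = σ (τ k) := fun v hv => hτσ k v ⟨hv.1.le, hv.2⟩
  set a := (τ k + t) / 2
  have hτa : τ k < a := by simp only [a]; linarith
  have hat : a < t := by simp only [a]; linarith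
  refine ⟨a, ⟨(hτ0 ▸ hτmono (Nat.zero_le k)).trans hτa.le, hat⟩, fun u hu => ?_⟩
  filter_upwards [Ioo_mem_nhds (hτa.trans_le hu.1) (hu.2.trans_le hright)] with v hv
  rw [hconst v hv, hconst a ⟨hτa, hat.trans_le hright⟩]

lemma mul_rhs_add_le_of_dominated {X : Type*} [MeasurableSpace X] {n : ℕ}
    {A A0 V0 : Matrix (Fin n) (Fin n) ℝ} {ν : Fin n → Fin n → SignedMeasure X}
    (hdomA : ∀ i j, metz A i j ≤ A0 i j) (hdomV : ∀ i j, tvar (ν i j) ≤ V0 i j)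
    {ξ : Fin n → ℝ} (hξ : ∀ i, 0 ≤ ξ i) {β c δ : ℝ} (hc : 0 ≤ c) (hδ : 0 ≤ δ)
    (hrate : ∀ i, β * ξ i + (A0 *ᵥ ξ) i + δ * (V0 *ᵥ ξ) i ≤ 0)
    {y : Fin n → ℝ} {z : Fin n → X → ℝ} (hy : ∀ j, |y j| ≤ c * ξ j)
    (hz : ∀ j θ, |z j θ| ≤ δ * (c * ξ j)) {s : ℝ} (hs : |s| ≤ 1) (i : Fin n) :
    s * ((∑ j, A i j * y j) + ∑ j, sint (ν i j) (z j)) + β * (c * ξ i) ≤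
      A i i * (s * y i - c * ξ i) := by
  have hrow := mul_rhs_le_of_dominated hdomA hdomV (b := c • ξ) (b' := (δ * c) • ξ) hy
    (fun j => mul_nonneg (mul_nonneg hδ hc) (hξ j))
    (fun j θ => (hz j θ).trans_eq (by simp [mul_assoc])) hs i
  have hrest : (A0 *ᵥ (c • ξ)) i + (V0 *ᵥ ((δ * c) • ξ)) i + β * (c * ξ i) =
      c * (β * ξ i + (A0 *ᵥ ξ) i + δ * (V0 *ᵥ ξ) i) := by
    simp only [mulVec_smul, Pi.smul_apply, smul_eq_mul]; ring
  simp only [Pi.smul_apply, smul_eq_mul] at hrow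
  nlinarith [mul_nonpos_of_nonneg_of_nonpos hc (hrate i)]

lemma IsSolution.abs_ne_barrier {h : ℝ} {N n : ℕ} {A : Fin N → Matrix (Fin n) (Fin n) ℝ}
    {ν : Fin N → Fin n → Fin n → SignedMeasure (Icc (-h) (0:ℝ))}
    {A0 V0 : Matrix (Fin n) (Fin n) ℝ} (hh : 0 ≤ h) {σ : ℝ → Fin N} (hσ : IsSwitchingSignal σ)
    {φ : C(Icc (-h) (0:ℝ), Fin n → ℝ)} {x : ℝ → Fin n → ℝ} (hx : IsSolution h σ A ν φ x)
    (hdomA : ∀ k i j, metz (A k) i j ≤ A0 i j) (hdomV : ∀ k i j, tvar (ν k i j) ≤ V0 i j)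
    {ξ : Fin n → ℝ} (hξ : ∀ i, 0 < ξ i) {β C : ℝ} (hβ : 0 ≤ β) (hC : 0 < C)
    (hrate : ∀ i, β * ξ i + (A0 *ᵥ ξ) i + Real.exp (β * h) * (V0 *ᵥ ξ) i ≤ 0)
    {t : ℝ} (ht : 0 < t) (hpast : ∀ u ∈ Ico (-h) t, ∀ j, |x u j| < C * Real.exp (-β * u) * ξ j)
    (i : Fin n) : |x t i| ≠ C * Real.exp (-β * t) * ξ i := by
  intro htouch
  obtain ⟨hxc, -, hxderiv⟩ := hx
  obtain ⟨a, ⟨ha0, hat⟩, hmode⟩ := hσ.exists_const_Ico ht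
  set m := σ a
  set s : ℝ := ↑(SignType.sign (x t i))
  have hs : |s| ≤ 1 := by
    rcases lt_trichotomy (x t i) 0 with hneg | hzero | hpos <;> simp [s, *]
  set g : ℝ → ℝ := fun u => s * x u i - C * Real.exp (-β * u) * ξ i
  set g' : ℝ → ℝ := fun u => s * ((∑ j, A m i j * x u j) +
    ∑ j, sint (ν m i j) fun θ => x (u + θ) j) + β * (C * Real.exp (-β * u) * ξ i)
  have hg_cont : ContinuousOn g (Icc a t) :=
    (continuousOn_const.mul (((continuous_apply i).comp_continuousOn hxc).mono
      fun u hu => show -h ≤ u by linarith [hu.1])).sub (by fun_prop)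
  have hg_deriv : ∀ u ∈ Ico a t, HasDerivWithinAt g (g' u) (Ici u) u := by
    intro u hu
    have hσu : ∀ᶠ v in 𝓝 u, σ v = σ u := by
      filter_upwards [hmode u hu] with v hv
      rw [hv, (hmode u hu).self_of_nhds]
    have hxu := hxderiv u (ha0.trans hu.1) hσu i
    rw [(hmode u hu).self_of_nhds] at hxu
    have hbarrier := ((((hasDerivAt_id u).const_mul (-β)).exp).const_mul C).mul_const (ξ i)
    simp only [id, mul_one] at hbarrier
    exact ((hxu.const_mul s).sub hbarrier.hasDerivWithinAt).congr_deriv (by ring)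
  have hg_bound : ∀ u ∈ Ico a t, g' u ≤ A m i i * g u := fun u hu =>
    mul_rhs_add_le_of_dominated (hdomA m) (hdomV m) (fun j => (hξ j).le)
      (by positivity) (Real.exp_pos _).le hrate (fun j => (hpast u ⟨by linarith [hu.1], hu.2⟩ j).le)
      (fun j θ => (hpast (u + θ) ⟨by linarith [θ.2.1, hu.1], by linarith [θ.2.2, hu.2]⟩ j).le.trans
        (by
          have : Real.exp (-β * (u + θ)) ≤ Real.exp (β * h) * Real.exp (-β * u) := by
            rw [← Real.exp_add]; exact Real.exp_le_exp.2 (by nlinarith [θ.2.1])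
          nlinarith [mul_le_mul_of_nonneg_left this (mul_pos hC (hξ j)).le])) hs i
  have hgron := le_gronwallBound_of_liminf_deriv_right_le hg_cont
    (fun u hu r hr => (hg_deriv u hu).liminf_right_slope_le hr) le_rfl
    (fun u hu => (hg_bound u hu).trans_eq (add_zero _).symm) t ⟨hat.le, le_rfl⟩
  rw [gronwallBound_ε0] at hgron
  have hga : g a < 0 := by
    have hsx : s * x a i ≤ |x a i| :=
      (le_abs_self _).trans (by rw [abs_mul]; exact mul_le_of_le_one_left (abs_nonneg _) hs)
    simp only [g]
    linarith [hpast a ⟨by linarith, hat⟩ i]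
  have hgt : g t = 0 := by simp only [g, s, sign_mul_self, htouch, sub_self]
  nlinarith [Real.exp_pos (A m i i * (t - a))]

lemma IsSolution.abs_lt_barrier {h : ℝ} {N n : ℕ} {A : Fin N → Matrix (Fin n) (Fin n) ℝ}
    {ν : Fin N → Fin n → Fin n → SignedMeasure (Icc (-h) (0:ℝ))}
    {A0 V0 : Matrix (Fin n) (Fin n) ℝ} (hh : 0 ≤ h) {σ : ℝ → Fin N} (hσ : IsSwitchingSignal σ)
    {φ : C(Icc (-h) (0:ℝ), Fin n → ℝ)} {x : ℝ → Fin n → ℝ} (hx : IsSolution h σ A ν φ x)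
    (hdomA : ∀ k i j, metz (A k) i j ≤ A0 i j) (hdomV : ∀ k i j, tvar (ν k i j) ≤ V0 i j)
    {ξ : Fin n → ℝ} (hξ : ∀ i, 0 < ξ i) {β C : ℝ} (hβ : 0 ≤ β)
    (hrate : ∀ i, β * ξ i + (A0 *ᵥ ξ) i + Real.exp (β * h) * (V0 *ᵥ ξ) i ≤ 0)
    (hC : ∀ i, ‖φ‖ < C * ξ i) :
    ∀ t ≥ 0, ∀ i, |x t i| < C * Real.exp (-β * t) * ξ i := by
  have hCξ : ∀ i, 0 < C * ξ i := fun i => (norm_nonneg φ).trans_lt (hC i)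
  have hinit : ∀ u ∈ Icc (-h) 0, ∀ j, |x u j| < C * Real.exp (-β * u) * ξ j := fun u hu j =>
    calc |x u j| = |φ ⟨u, hu⟩ j| := by rw [hx.2.1 ⟨u, hu⟩]
      _ ≤ ‖φ‖ := (norm_le_pi_norm _ j).trans (φ.norm_coe_le_norm _)
      _ < C * ξ j := hC j
      _ ≤ C * ξ j * Real.exp (-β * u) :=
          le_mul_of_one_le_right (hCξ j).le (Real.one_le_exp (by nlinarith [hu.2]))
      _ = C * Real.exp (-β * u) * ξ j := by ring
  refine fun t ht i => sub_pos.1 (forall_pos_of_ne_zero_at_first_zero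
    (f := fun u j => C * Real.exp (-β * u) * ξ j - |x u j|) ?_
    (fun j => sub_pos.2 (hinit 0 ⟨by linarith, le_rfl⟩ j)) (fun t ht hbefore i => ?_) t ht i)
  · exact continuousOn_pi.2 fun j => (by fun_prop : Continuous fun u =>
      C * Real.exp (-β * u) * ξ j).continuousOn.sub
      (((continuous_apply j).comp_continuousOn hx.1).abs.mono (Ici_subset_Ici.2 (by linarith)))
  refine sub_ne_zero.2 (hx.abs_ne_barrier hh hσ hdomA hdomV hξ hβ
    (pos_of_mul_pos_left (hCξ i) (hξ i).le) hrate ht (fun u hu j => ?_) i).symm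
  rcases lt_or_ge u 0 with hu0 | hu0
  · exact hinit u ⟨hu.1, hu0.le⟩ j
  · exact sub_pos.1 (hbefore u ⟨hu0, hu.2⟩ j)

lemma exists_pos_rate {n : ℕ} {A0 V0 : Matrix (Fin n) (Fin n) ℝ} {ξ : Fin n → ℝ} (h : ℝ)
    (hneg : ∀ i, ((A0 + V0) *ᵥ ξ) i < 0) :
    ∃ β > 0, ∀ i, β * ξ i + (A0 *ᵥ ξ) i + Real.exp (β * h) * (V0 *ᵥ ξ) i ≤ 0 := by
  have hev : ∀ᶠ β in 𝓝 (0 : ℝ), ∀ i, β * ξ i + (A0 *ᵥ ξ) i + Real.exp (β * h) * (V0 *ᵥ ξ) i < 0 :=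
    eventually_all.2 fun i => (by fun_prop : Continuous fun β : ℝ =>
      β * ξ i + (A0 *ᵥ ξ) i + Real.exp (β * h) * (V0 *ᵥ ξ) i).continuousAt.eventually_lt
        continuousAt_const (by simpa [add_mulVec] using hneg i)
  obtain ⟨β, hβ, hβpos⟩ := ((hev.filter_mono nhdsWithin_le_nhds).and
    (self_mem_nhdsWithin : Ioi (0 : ℝ) ∈ 𝓝[>] 0)).exists
  exact ⟨β, hβpos, fun i => (hβ i).le⟩

theorem expStableSw_of_pos_mulVec_neg {h : ℝ} {N n : ℕ} {A : Fin N → Matrix (Fin n) (Fin n) ℝ}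
    {ν : Fin N → Fin n → Fin n → SignedMeasure (Icc (-h) (0:ℝ))}
    {A0 V0 : Matrix (Fin n) (Fin n) ℝ} (hh : 0 ≤ h) {ξ : Fin n → ℝ} (hξ : ∀ i, 0 < ξ i)
    (hneg : ∀ i, ((A0 + V0) *ᵥ ξ) i < 0)
    (hdomA : ∀ k i j, metz (A k) i j ≤ A0 i j) (hdomV : ∀ k i j, tvar (ν k i j) ≤ V0 i j) :
    ExpStableSw h A ν := by
  obtain ⟨β, hβ, hrate⟩ := exists_pos_rate h hneg
  set κ := ‖fun i => (ξ i)⁻¹‖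
  have hκ : ∀ i, 1 ≤ κ * ξ i := fun i => (inv_le_iff_one_le_mul₀ (hξ i)).1 <| by
    simpa [abs_of_pos (hξ i)] using norm_le_pi_norm (fun i => (ξ i)⁻¹) i
  refine ⟨‖ξ‖ * κ + 1, by positivity, β, hβ, fun σ hσ φ x hx t ht => ?_⟩
  have hxi : ∀ i, |x t i| ≤ ‖φ‖ * κ * Real.exp (-β * t) * ξ i := fun i => by
    have hk : 0 < Real.exp (-β * t) * ξ i := mul_pos (Real.exp_pos _) (hξ i)
    suffices |x t i| / (Real.exp (-β * t) * ξ i) ≤ ‖φ‖ * κ by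
      rw [div_le_iff₀ hk] at this; linarith
    refine forall_gt_iff_le.1 fun C hC => (div_lt_iff₀ hk).2 ?_
    have hφ : ∀ j, ‖φ‖ < C * ξ j := fun j => by nlinarith [hκ j, hξ j, norm_nonneg φ]
    linarith [hx.abs_lt_barrier hh hσ hdomA hdomV hξ hβ.le hrate hφ t ht i]
  refine (pi_norm_le_iff_of_nonneg (by positivity)).2 fun i => ?_
  calc ‖x t i‖ ≤ ‖φ‖ * κ * Real.exp (-β * t) * ξ i := (Real.norm_eq_abs _).trans_le (hxi i)
    _ ≤ ‖φ‖ * κ * Real.exp (-β * t) * ‖ξ‖ := by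
        gcongr; exact (le_abs_self _).trans (norm_le_pi_norm ξ i)
    _ ≤ (‖ξ‖ * κ + 1) * Real.exp (-β * t) * ‖φ‖ := by
        nlinarith [norm_nonneg φ, norm_nonneg ξ, Real.exp_pos (-β * t),
          mul_nonneg (norm_nonneg φ) (Real.exp_pos (-β * t)).le]

/-- Corollary (sets of switched systems): let `(A₀, μ₀)` be a positive linear delay system
(`A₀` Metzler, `μ₀` a matrix of finite nonnegative Borel measures) which is exponentially
stable. Then every time-delay switched linear system `(A, ν)` whose data satisfy, entrywise,
`M(A⁰_k) ≤ A₀` and `V(ν_k) ≤ V(μ₀)` for every `k`, is exponentially stable under arbitrary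
switching. -/
theorem expStableSw_of_dominated_by_stable_positive {N n : ℕ} (h : ℝ) (hh : 0 < h)
    (A0 : Matrix (Fin n) (Fin n) ℝ) (hA0 : ∀ i j, i ≠ j → 0 ≤ A0 i j)
    (μ0 : Fin n → Fin n → MeasureTheory.Measure (Set.Icc (-h) (0:ℝ)))
    (hfin : ∀ i j, MeasureTheory.IsFiniteMeasure (μ0 i j))
    (hstab0 : ExpStable1 h A0
      (fun i j => @MeasureTheory.Measure.toSignedMeasure _ _ (μ0 i j) (hfin i j)))
    (A : Fin N → Matrix (Fin n) (Fin n) ℝ)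
    (ν : Fin N → Fin n → Fin n → MeasureTheory.SignedMeasure (Set.Icc (-h) (0:ℝ)))
    (hdomA : ∀ k i j, metz (A k) i j ≤ A0 i j)
    (hdomV : ∀ k i j, tvar (ν k i j) ≤ ((μ0 i j) Set.univ).toReal) :
    ExpStableSw h A ν := by
  obtain ⟨ξ, hξ, hξeq⟩ := hstab0.exists_pos_mulVec_eq_neg_one hA0
  refine expStableSw_of_pos_mulVec_neg (V0 := expMomentMat μ0 0) hh.le hξ (by simp [hξeq]) hdomA
    fun k i j => ?_
  rw [expMomentMat_zero]
  exact hdomV k i j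

end
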